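/- Fix an integer m ≥ 2 and set ρ_j = 1/(4·cos²(jπ/(m+1))) for 1 ≤ j ≤ ⌊m/2⌋. Then, as polynomials over ℝ (viewing p_m with real coefficients), p_m(x) = ∏_{j=1}^{⌊m/2⌋} (1 − x/ρ_j); in particular the roots ρ_j of p_m are simple. Moreover 0 < ρ_1 < ρ_2 < ⋯ < ρ_{⌊m/2⌋}, so ρ_1 is the unique root of p_m of smallest modulus. -/

import Mathlib

/-!
At `x = 1/(4 cos² θ)` the recurrence for `p_r` is, after rescaling by `(2 cos θ)^r`, the
recurrence `sin((r+2)θ) = 2 cos θ · sin((r+1)θ) - sin(rθ)`, so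
`p_r(1/(4 cos² θ)) (2 cos θ)^r sin θ = sin((r+1)θ)`. Taking `θ = jπ/(m+1)` with
`1 ≤ j ≤ ⌊m/2⌋` gives `⌊m/2⌋` roots `ρ_j` of `p_m`, distinct and increasing in `j` because
`cos` decreases on `[0, π/2)`. Since `deg p_m ≤ ⌊m/2⌋` and `p_m(0) = 1`, these are all the
roots, each simple, and `p_m` is the product of the `1 - x/ρ_j`, which agrees with `p_m` at the
`⌊m/2⌋ + 1` points `0, ρ_1, …, ρ_{⌊m/2⌋}`.
-/

/-- The Chebyshev-type polynomial sequence over `ℝ`: `p 0 = p 1 = 1`,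
`p (r+2) = p (r+1) - X * p r`. -/
noncomputable def chebR : ℕ → Polynomial ℝ
  | 0 => 1
  | 1 => 1
  | (r+2) => chebR (r+1) - Polynomial.X * chebR r

/-- `rho m j = 1/(4·cos²(jπ/(m+1)))`. -/
noncomputable def rho (m j : ℕ) : ℝ :=
  1 / (4 * Real.cos ((j : ℝ) * Real.pi / ((m : ℝ) + 1)) ^ 2)

open Polynomial Real

namespace Polynomial

theorem roots_eq_of_natDegree_le_card {R : Type*} [CommRing R] [IsDomain R] {p : R[X]}
    {s : Finset R} (hp : p ≠ 0) (hdeg : p.natDegree ≤ s.card)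
    (hroot : ∀ a ∈ s, p.IsRoot a) : p.roots = s.val := by
  have hle : s.val ≤ p.roots :=
    (Multiset.le_iff_subset s.nodup).2 fun a ha => (mem_roots hp).2 (hroot a ha)
  exact (Multiset.eq_of_le_of_card_le hle ((card_roots' p).trans hdeg)).symm

theorem natDegree_prod_one_sub_C_mul_X_le {R ι : Type*} [CommRing R] (s : Finset ι)
    (c : ι → R) :
    (∏ a ∈ s, (1 - C (c a) * X)).natDegree ≤ s.card := by
  refine (natDegree_prod_le _ _).trans ?_
  have h : ∀ a ∈ s, (1 - C (c a) * X).natDegree ≤ 1 := fun a _ => by compute_degree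
  simpa using Finset.sum_le_card_nsmul s _ 1 h

theorem eq_prod_one_sub_C_inv_mul_X {K : Type*} [Field K] {p : K[X]} {s : Finset K}
    (h0 : p.eval 0 = 1) (hdeg : p.natDegree ≤ s.card) (hroot : ∀ a ∈ s, p.IsRoot a) :
    p = ∏ a ∈ s, (1 - C a⁻¹ * X) := by
  classical
  have h0s : (0 : K) ∉ s := fun h => by simpa [h0] using hroot 0 h
  have hcard : (insert 0 s).card = s.card + 1 := Finset.card_insert_of_notMem h0s
  refine eq_of_degrees_lt_of_eval_finset_eq (insert 0 s) ?_ ?_ ?_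
  · exact degree_le_natDegree.trans_lt (by rw [hcard]; exact_mod_cast Nat.lt_succ_of_le hdeg)
  · exact degree_le_natDegree.trans_lt
      (by rw [hcard]; exact_mod_cast Nat.lt_succ_of_le (natDegree_prod_one_sub_C_mul_X_le s _))
  · intro x hx
    rcases Finset.mem_insert.1 hx with rfl | hx
    · simp [h0, eval_prod]
    · rw [(hroot x hx).eq_zero, eval_prod, eq_comm]
      exact Finset.prod_eq_zero hx (by simp [inv_mul_cancel₀ (ne_of_mem_of_not_mem hx h0s)])

end Polynomial

theorem chebR_eval_zero (r : ℕ) : (chebR r).eval 0 = 1 := by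
  induction r using Nat.twoStepInduction with
  | zero | one => simp [chebR]
  | more n ih₁ ih₂ => simp [chebR, ih₂]

theorem chebR_ne_zero (r : ℕ) : chebR r ≠ 0 := fun h => by
  simpa [h] using chebR_eval_zero r

theorem chebR_natDegree_le (r : ℕ) : (chebR r).natDegree ≤ r / 2 := by
  induction r using Nat.twoStepInduction with
  | zero | one => simp [chebR]
  | more n ih₁ ih₂ =>
    have hX : (X * chebR n).natDegree ≤ n / 2 + 1 :=
      natDegree_mul_le.trans (by rw [natDegree_X]; omega)
    exact (natDegree_sub_le _ _).trans (max_le (by omega) (by omega))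

theorem chebR_eval_mul_sin {θ : ℝ} (hθ : cos θ ≠ 0) (r : ℕ) :
    (chebR r).eval (1 / (4 * cos θ ^ 2)) * (2 * cos θ) ^ r * sin θ = sin ((r + 1) * θ) := by
  induction r using Nat.twoStepInduction with
  | zero => simp [chebR]
  | one => simp [chebR, sin_two_mul, one_add_one_eq_two]; ring
  | more n ih₁ ih₂ =>
    have hx : 1 / (4 * cos θ ^ 2) * (2 * cos θ) ^ 2 = 1 := by field_simp; ring
    have hsin :
        sin ((n + 2 + 1) * θ) + sin ((n + 1) * θ) = 2 * cos θ * sin ((n + 1 + 1) * θ) := by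
      rw [show (n + 2 + 1) * θ = (n + 1 + 1) * θ + θ by ring,
        show (n + 1) * θ = (n + 1 + 1) * θ - θ by ring, sin_add, sin_sub]
      ring
    simp only [chebR, eval_sub, eval_mul, eval_X]
    push_cast at ih₁ ih₂ ⊢
    linear_combination (2 * cos θ) * ih₂ - (1 / (4 * cos θ ^ 2) * (2 * cos θ) ^ 2) * ih₁
      - sin ((n + 1) * θ) * hx - hsin

theorem angle_mem_Ico {m j : ℕ} (hj : j ≤ m / 2) :
    (j : ℝ) * π / (m + 1) ∈ Set.Ico 0 (π / 2) := by
  have h2j : 2 * (j : ℝ) < m + 1 := by exact_mod_cast (show 2 * j < m + 1 by omega)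
  refine ⟨by positivity, ?_⟩
  rw [div_lt_div_iff₀ (by positivity) two_pos]
  nlinarith [pi_pos]

theorem cos_angle_pos {m j : ℕ} (hj : j ≤ m / 2) : 0 < cos ((j : ℝ) * π / (m + 1)) := by
  obtain ⟨h0, hlt⟩ := angle_mem_Ico hj
  exact cos_pos_of_mem_Ioo ⟨by linarith [pi_pos], hlt⟩

theorem rho_pos {m j : ℕ} (hj : j ≤ m / 2) : 0 < rho m j := by
  have := cos_angle_pos hj
  unfold rho
  positivity

theorem rho_strictMonoOn (m : ℕ) : StrictMonoOn (rho m) (Set.Iic (m / 2)) := by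
  intro j hj k hk hjk
  obtain ⟨hθj, -⟩ := angle_mem_Ico hj
  obtain ⟨-, hθk⟩ := angle_mem_Ico hk
  have hθ : (j : ℝ) * π / (m + 1) < k * π / (m + 1) := by gcongr
  have hcos : cos ((k : ℝ) * π / (m + 1)) < cos (j * π / (m + 1)) :=
    cos_lt_cos_of_nonneg_of_le_pi hθj (by linarith [pi_pos]) hθ
  have hk₀ := cos_angle_pos hk
  unfold rho
  gcongr

theorem chebR_isRoot_rho {m j : ℕ} (hj₀ : 0 < j) (hj : j ≤ m / 2) :
    (chebR m).IsRoot (rho m j) := by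
  set θ : ℝ := j * π / (m + 1) with hθ
  obtain ⟨-, hθ_lt⟩ := angle_mem_Ico hj
  have hθ_pos : 0 < θ := by positivity
  have hcos : 0 < cos θ := cos_angle_pos hj
  have hsin : 0 < sin θ := sin_pos_of_pos_of_lt_pi hθ_pos (by linarith [pi_pos])
  have hsin_m : sin ((m + 1) * θ) = 0 := by
    rw [hθ, mul_div_cancel₀ _ (by positivity : (m : ℝ) + 1 ≠ 0)]
    exact sin_nat_mul_pi j
  have h := chebR_eval_mul_sin hcos.ne' m
  rw [hsin_m, mul_assoc] at h
  exact (mul_eq_zero.1 h).resolve_right (by positivity)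

theorem rho_injOn_Icc (m : ℕ) : Set.InjOn (rho m) (Finset.Icc 1 (m / 2)) :=
  (rho_strictMonoOn m).injOn.mono fun _ hj => (Finset.mem_Icc.1 hj).2

theorem chebR_natDegree_le_card_image_rho (m : ℕ) :
    (chebR m).natDegree ≤ ((Finset.Icc 1 (m / 2)).image (rho m)).card := by
  rw [Finset.card_image_of_injOn (rho_injOn_Icc m), Nat.card_Icc, Nat.add_sub_cancel]
  exact chebR_natDegree_le m

theorem chebR_isRoot_of_mem_image_rho {m : ℕ} {x : ℝ}
    (hx : x ∈ (Finset.Icc 1 (m / 2)).image (rho m)) : (chebR m).IsRoot x := by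
  obtain ⟨j, hj, rfl⟩ := Finset.mem_image.1 hx
  exact chebR_isRoot_rho (Finset.mem_Icc.1 hj).1 (Finset.mem_Icc.1 hj).2

theorem chebR_roots (m : ℕ) : (chebR m).roots = ((Finset.Icc 1 (m / 2)).image (rho m)).val :=
  roots_eq_of_natDegree_le_card (chebR_ne_zero m) (chebR_natDegree_le_card_image_rho m)
    fun _ => chebR_isRoot_of_mem_image_rho

theorem chebR_eq_prod (m : ℕ) :
    chebR m = ∏ j ∈ Finset.Icc 1 (m / 2), (1 - C (rho m j)⁻¹ * X) := by
  rw [← Finset.prod_image (f := fun a => 1 - C a⁻¹ * X) (rho_injOn_Icc m)]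
  exact eq_prod_one_sub_C_inv_mul_X (chebR_eval_zero m) (chebR_natDegree_le_card_image_rho m)
    fun _ => chebR_isRoot_of_mem_image_rho

theorem statement9_general (m : ℕ) :
    (chebR m = ∏ j ∈ Finset.Icc 1 (m / 2),
        (1 - Polynomial.C (rho m j)⁻¹ * Polynomial.X)) ∧
    (∀ j ∈ Finset.Icc 1 (m / 2), (chebR m).rootMultiplicity (rho m j) = 1) ∧
    (∀ j ∈ Finset.Icc 1 (m / 2), 0 < rho m j) ∧
    (∀ j k : ℕ, 1 ≤ j → j < k → k ≤ m / 2 → rho m j < rho m k) ∧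
    (∀ x : ℝ, (chebR m).IsRoot x → x = rho m 1 ∨ |rho m 1| < |x|) := by
  refine ⟨chebR_eq_prod m, fun j hj => ?_, fun j hj => rho_pos (Finset.mem_Icc.1 hj).2,
    fun j k _ hjk hk => rho_strictMonoOn m (hjk.le.trans hk) hk hjk, fun x hx => ?_⟩
  · rw [← count_roots, chebR_roots]
    exact Multiset.count_eq_one_of_mem (Finset.nodup _) (Finset.mem_image_of_mem _ hj)
  · have hx' : x ∈ (chebR m).roots := (mem_roots (chebR_ne_zero m)).2 hx
    rw [chebR_roots, Finset.mem_val, Finset.mem_image] at hx'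
    obtain ⟨j, hj, rfl⟩ := hx'
    obtain ⟨hj₁, hj⟩ := Finset.mem_Icc.1 hj
    rcases hj₁.eq_or_lt with rfl | h₁
    · exact Or.inl rfl
    · right
      rw [abs_of_pos (rho_pos (j := 1) (by omega)), abs_of_pos (rho_pos hj)]
      exact rho_strictMonoOn m (h₁.le.trans hj) hj h₁

/-- fix `m ≥ 2` and set `ρ_j = 1/(4cos²(jπ/(m+1)))` for
`1 ≤ j ≤ ⌊m/2⌋`.  Then `p_m(x) = ∏_{j=1}^{⌊m/2⌋} (1 - x/ρ_j)` as real
polynomials; in particular each `ρ_j` is a simple root of `p_m`.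
Moreover `0 < ρ_1 < ρ_2 < ⋯ < ρ_{⌊m/2⌋}`, so `ρ_1` is the unique root of
`p_m` of smallest modulus. -/
theorem statement9 (m : ℕ) (hm : 2 ≤ m) :
    (chebR m = ∏ j ∈ Finset.Icc 1 (m / 2),
        (1 - Polynomial.C (rho m j)⁻¹ * Polynomial.X)) ∧
    (∀ j ∈ Finset.Icc 1 (m / 2), (chebR m).rootMultiplicity (rho m j) = 1) ∧
    (∀ j ∈ Finset.Icc 1 (m / 2), 0 < rho m j) ∧
    (∀ j k : ℕ, 1 ≤ j → j < k → k ≤ m / 2 → rho m j < rho m k) ∧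
    (∀ x : ℝ, (chebR m).IsRoot x → x = rho m 1 ∨ |rho m 1| < |x|) :=
  statement9_general m
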